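/- The truncated Seiberg–Witten map of the deformed abelian Chern–Simons theory intertwines the field equations up to third order in the deformation: for every smooth vector field A: ℝ³ → ℝ³, the two polynomials in t (with smooth vector-field coefficients) F̂ₜ( Âₜ(A) ) and (curl A)·( 1 − t(v·A) + ½t²(v·A)² ) have equal coefficients in t-degrees 0, 1 and 2. -/

import Mathlib

/-!
Write `s = v·A` and `f(s) = 1 − ts + ½t²s²`, so that `Âₜ(A) = f(s) A`. By the product and chain rules
`∂_b(f(s) A_c) = f(s) ∂_b A_c + f'(s) ∂_b s A_c`, and `v·Âₜ(A) = f(s) s`; hence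
`F̂ₜ(Âₜ(A)) = f(s) curl A + R(t, s) (∇s × A)` for an explicit polynomial `R`. The first term is exactly
the right-hand side, and `R(t, s) = Σ_{k=3}^{8} κₖ s^{k-1} tᵏ` has no terms of degree below 3 in `t`.
-/

noncomputable section

abbrev V3 := Fin 3 → ℝ

/-- Partial derivative ∂_i f at x. -/
def pd (f : V3 → ℝ) (i : Fin 3) (x : V3) : ℝ :=
  fderiv ℝ f x (Pi.single i 1)

/-- Levi-Civita symbol ε_{abc} on Fin 3. -/
def eps (a b c : Fin 3) : ℝ :=
  (((b : ℕ) : ℝ) - ((a : ℕ) : ℝ)) * (((c : ℕ) : ℝ) - ((b : ℕ) : ℝ)) *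
    (((c : ℕ) : ℝ) - ((a : ℕ) : ℝ)) / 2

/-- (curl A)_a = Σ_{b,c} ε_{abc} ∂_b A_c. -/
def curl (A : V3 → V3) (a : Fin 3) (x : V3) : ℝ :=
  ∑ b, ∑ c, eps a b c * pd (fun y => A y c) b x

/-- Truncated Seiberg–Witten field redefinition
  Âₜ(A) = A − t(v·A)A + ½t²(v·A)²A. -/
def hatA (v : V3) (t : ℝ) (A : V3 → V3) : V3 → V3 :=
  fun x a => A x a - t * (∑ i, v i * A x i) * A x a
    + (1 / 2) * t ^ 2 * (∑ i, v i * A x i) ^ 2 * A x a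

/-- Truncated deformed field equation
  F̂ₜ(B)_a = Σ_{b,c} ε_{abc}( ∂_bB_c + t Σ_i v_i ∂_bB_i B_c
    + 2t² Σ_{i,j} v_iv_j ∂_bB_i B_j B_c ). -/
def hatF (v : V3) (t : ℝ) (B : V3 → V3) (x : V3) (a : Fin 3) : ℝ :=
  ∑ b, ∑ c, eps a b c *
    (pd (fun y => B y c) b x
      + t * ∑ i, v i * pd (fun y => B y i) b x * B x c
      + 2 * t ^ 2 * ∑ i, ∑ j, v i * v j * pd (fun y => B y i) b x * B x j * B x c)

open scoped ContDiff

/-- `(∇f × A)_a`. -/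
def gradCross (f : V3 → ℝ) (A : V3 → V3) (a : Fin 3) (x : V3) : ℝ :=
  ∑ b, ∑ c, eps a b c * pd f b x * A x c

def swFactor (t s : ℝ) : ℝ :=
  1 - t * s + 1 / 2 * t ^ 2 * s ^ 2

/-- Read off by expanding the left side of `swFactor_remainder_eq_sum` in powers of `t`. -/
def swRemainderCoeff : ℕ → ℝ
  | 3 => -4
  | 4 => 25 / 2
  | 5 => -61 / 4
  | 6 => 21 / 2
  | 7 => -4
  | 8 => 3 / 4
  | _ => 0

section PartialDerivatives

variable {x : V3} {b : Fin 3}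

lemma pd_mul {f g : V3 → ℝ} (hf : DifferentiableAt ℝ f x) (hg : DifferentiableAt ℝ g x) :
    pd (fun y => f y * g y) b x = f x * pd g b x + pd f b x * g x := by
  simp only [pd, fderiv_fun_mul hf hg, add_apply, smul_apply, smul_eq_mul]
  ring

lemma pd_comp {h : ℝ → ℝ} {h' : ℝ} {f : V3 → ℝ} (hh : HasDerivAt h h' (f x))
    (hf : DifferentiableAt ℝ f x) :
    pd (fun y => h (f y)) b x = h' * pd f b x := by
  have hcomp : HasFDerivAt (fun y => h (f y)) (h' • fderiv ℝ f x) x :=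
    hh.comp_hasFDerivAt x hf.hasFDerivAt
  simp [pd, hcomp.fderiv]

lemma pd_dotProduct (v : V3) {A : V3 → V3} (hA : DifferentiableAt ℝ A x) :
    pd (fun y => v ⬝ᵥ A y) b x = v ⬝ᵥ fun i => pd (fun y => A y i) b x := by
  have hAi : ∀ i, DifferentiableAt ℝ (fun y => A y i) x := differentiableAt_pi.mp hA
  simp only [pd, dotProduct, fderiv_fun_sum fun i _ => (hAi i).const_mul (v i),
    sum_apply, fderiv_const_mul (hAi _), smul_apply, smul_eq_mul]

lemma contDiff_pd {f : V3 → ℝ} (hf : ContDiff ℝ ∞ f) (i : Fin 3) :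
    ContDiff ℝ ∞ (pd f i) :=
  (hf.fderiv_right le_rfl).clm_apply contDiff_const

end PartialDerivatives

lemma contDiff_gradCross {f : V3 → ℝ} {A : V3 → V3} (hf : ContDiff ℝ ∞ f)
    (hA : ContDiff ℝ ∞ A) (a : Fin 3) : ContDiff ℝ ∞ (gradCross f A a) :=
  ContDiff.sum fun b _ => ContDiff.sum fun c _ =>
    (contDiff_const.mul (contDiff_pd hf b)).mul (contDiff_pi.mp hA c)

lemma hasDerivAt_swFactor (t s : ℝ) : HasDerivAt (swFactor t) (-t + t ^ 2 * s) s := by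
  refine ((((hasDerivAt_id' s).const_mul t).const_sub 1).fun_add
    (((hasDerivAt_id' s).fun_pow 2).const_mul (1 / 2 * t ^ 2))).congr_deriv ?_
  norm_num
  ring

lemma hatA_eq_swFactor_mul (v : V3) (t : ℝ) (A : V3 → V3) :
    hatA v t A = fun y c => swFactor t (v ⬝ᵥ A y) * A y c := by
  funext y c
  simp only [hatA, swFactor, dotProduct]
  ring

lemma hatF_eq_sum_dotProduct (v : V3) (t : ℝ) (B : V3 → V3) (x : V3) (a : Fin 3) :
    hatF v t B x a = ∑ b, ∑ c, eps a b c *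
      (pd (fun y => B y c) b x + t * (v ⬝ᵥ fun i => pd (fun y => B y i) b x) * B x c
        + 2 * t ^ 2 * (v ⬝ᵥ fun i => pd (fun y => B y i) b x) * (v ⬝ᵥ B x) * B x c) := by
  refine Finset.sum_congr rfl fun b _ => Finset.sum_congr rfl fun c _ => ?_
  set p := fun i => pd (fun y => B y i) b x
  have hlin : ∑ i, v i * p i * B x c = (v ⬝ᵥ p) * B x c := by
    rw [dotProduct, Finset.sum_mul]
  have hquad : ∑ i, ∑ j, v i * v j * p i * B x j * B x c = (v ⬝ᵥ p) * (v ⬝ᵥ B x) * B x c := by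
    rw [dotProduct, dotProduct, Fintype.sum_mul_sum, Finset.sum_mul]
    refine Finset.sum_congr rfl fun i _ => ?_
    rw [Finset.sum_mul]
    exact Finset.sum_congr rfl fun j _ => by ring
  rw [hlin, hquad]
  ring

lemma pd_mul_comp_dotProduct (v : V3) {A : V3 → V3} {x : V3} {h : ℝ → ℝ} {h' : ℝ}
    (hA : DifferentiableAt ℝ A x) (hh : HasDerivAt h h' (v ⬝ᵥ A x)) (b : Fin 3) :
    (fun c => pd (fun y => h (v ⬝ᵥ A y) * A y c) b x) =
      h (v ⬝ᵥ A x) • (fun c => pd (fun y => A y c) b x)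
        + (h' * pd (fun y => v ⬝ᵥ A y) b x) • A x := by
  have hAi : ∀ i, DifferentiableAt ℝ (fun y => A y i) x := differentiableAt_pi.mp hA
  have hs : DifferentiableAt ℝ (fun y => v ⬝ᵥ A y) x :=
    DifferentiableAt.fun_sum fun i _ => (hAi i).const_mul (v i)
  funext c
  rw [pd_mul (f := fun y => h (v ⬝ᵥ A y)) (hh.differentiableAt.comp x hs) (hAi c),
    pd_comp (f := fun y => v ⬝ᵥ A y) hh hs]
  simp only [Pi.add_apply, Pi.smul_apply, smul_eq_mul]

theorem hatF_mul_comp_dotProduct (v : V3) (t : ℝ) {A : V3 → V3} {x : V3} {h : ℝ → ℝ} {h' : ℝ}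
    (hA : DifferentiableAt ℝ A x) (hh : HasDerivAt h h' (v ⬝ᵥ A x)) (a : Fin 3) :
    hatF v t (fun y c => h (v ⬝ᵥ A y) * A y c) x a =
      h (v ⬝ᵥ A x) * curl A a x
        + (h' + t * (h (v ⬝ᵥ A x) + h' * v ⬝ᵥ A x) * h (v ⬝ᵥ A x)
            + 2 * t ^ 2 * (h (v ⬝ᵥ A x) + h' * v ⬝ᵥ A x) * v ⬝ᵥ A x * h (v ⬝ᵥ A x) ^ 2)
          * gradCross (fun y => v ⬝ᵥ A y) A a x := by
  set s := v ⬝ᵥ A x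
  have hpdB := pd_mul_comp_dotProduct v hA hh
  have hdotB : v ⬝ᵥ (fun c => h s * A x c) = h s * s := by
    change v ⬝ᵥ (h s • A x) = _
    rw [dotProduct_smul, smul_eq_mul]
  have hdot_pdB : ∀ b, (v ⬝ᵥ fun i => pd (fun y => h (v ⬝ᵥ A y) * A y i) b x) =
      (h s + h' * s) * pd (fun y => v ⬝ᵥ A y) b x := by
    intro b
    rw [hpdB, dotProduct_add, dotProduct_smul, dotProduct_smul, ← pd_dotProduct v hA]
    simp only [smul_eq_mul]
    ring
  calc _ = ∑ b, ∑ c, (h s * (eps a b c * pd (fun y => A y c) b x)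
          + (h' + t * (h s + h' * s) * h s + 2 * t ^ 2 * (h s + h' * s) * s * h s ^ 2)
            * (eps a b c * pd (fun y => v ⬝ᵥ A y) b x * A x c)) := by
        rw [hatF_eq_sum_dotProduct]
        refine Finset.sum_congr rfl fun b _ => Finset.sum_congr rfl fun c _ => ?_
        rw [hdot_pdB, hdotB, congrFun (hpdB b) c]
        simp only [Pi.add_apply, Pi.smul_apply, smul_eq_mul]
        ring
    _ = _ := by simp only [Finset.sum_add_distrib, ← Finset.mul_sum, curl, gradCross]

theorem swFactor_remainder_eq_sum (t s : ℝ) :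
    (-t + t ^ 2 * s) + t * (swFactor t s + (-t + t ^ 2 * s) * s) * swFactor t s
        + 2 * t ^ 2 * (swFactor t s + (-t + t ^ 2 * s) * s) * s * swFactor t s ^ 2 =
      ∑ k ∈ Finset.range 9, swRemainderCoeff k * s ^ (k - 1) * t ^ k := by
  simp [Finset.sum_range_succ, swRemainderCoeff, swFactor]
  ring

theorem truncated_SW_intertwines_field_equations
    (v : V3) (A : V3 → V3) (hA : ContDiff ℝ (⊤ : ℕ∞) A) :
    ∃ (N : ℕ) (c : ℕ → V3 → V3),
      (∀ k, ContDiff ℝ (⊤ : ℕ∞) (c k)) ∧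
      (∀ (t : ℝ) (x : V3) (a : Fin 3),
        hatF v t (hatA v t A) x a
          - curl A a x *
              (1 - t * (∑ i, v i * A x i)
                + (1 / 2) * t ^ 2 * (∑ i, v i * A x i) ^ 2)
        = ∑ k ∈ Finset.range (N + 1), c k x a * t ^ k) ∧
      c 0 = 0 ∧ c 1 = 0 ∧ c 2 = 0 := by
  have hdot : ContDiff ℝ ∞ fun y => v ⬝ᵥ A y :=
    ContDiff.sum fun i _ => contDiff_const.mul (contDiff_pi.mp hA i)
  refine ⟨8, fun k x a => swRemainderCoeff k * (v ⬝ᵥ A x) ^ (k - 1) *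
      gradCross (fun y => v ⬝ᵥ A y) A a x, fun k => ?_, fun t x a => ?_, ?_, ?_, ?_⟩
  · exact contDiff_pi.mpr fun a =>
      (contDiff_const.mul (hdot.pow _)).mul (contDiff_gradCross hdot hA a)
  · rw [hatA_eq_swFactor_mul, hatF_mul_comp_dotProduct v t (hA.differentiable (by simp) x)
      (hasDerivAt_swFactor t _), swFactor_remainder_eq_sum, Finset.sum_mul]
    change _ - _ * swFactor t (v ⬝ᵥ A x) = _
    rw [mul_comm (curl A a x), add_sub_cancel_left]
    exact Finset.sum_congr rfl fun k _ => by ring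
  all_goals funext x a; simp [swRemainderCoeff]
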